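/- arXiv:2409.02570 — 4 statements merged into one kernel-verified Lean document; each statement's English description precedes it below -/
import Mathlib

section
/- Let $a_i, a_j \in (0,1/2)$ with $a_i > a_j$. Define $\Delta_{ij} = (1-4a_i^2)(1-4a_j^2)$, $u = \frac{1}{2}\cdot\frac{4a_i^2-1+\sqrt{\Delta_{ij}}}{a_i^2-a_j^2}\, a_j$ and $v = \frac{1}{2}\cdot\frac{4a_j^2-1+\sqrt{\Delta_{ij}}}{a_j^2-a_i^2}\, a_i$. Then $u/a_j < 1 < v/a_i$. -/
/- With `A = 1 - 4 ai²`, `B = 1 - 4 aj²` and `s = √(AB)` we have `4 (ai² - aj²) = B - A > 0`,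
`u / aj = 2 (s - A) / (B - A)` and `v / ai = 2 (B - s) / (B - A)`; both inequalities say
`s < (A + B) / 2`, the strict AM–GM inequality for `A ≠ B`. -/

open NNReal in
theorem Real.sqrt_mul_lt_half_add_of_ne {x y : ℝ} (hx : 0 ≤ x) (hy : 0 ≤ y) (h : x ≠ y) :
    √(x * y) < (x + y) / 2 := by
  lift x to ℝ≥0 using hx
  lift y to ℝ≥0 using hy
  rw [← NNReal.coe_mul, ← Real.coe_sqrt]
  exact_mod_cast NNReal.sqrt_mul_lt_half_add_of_ne (by exact_mod_cast h)

theorem u_v_normalized_ineq (ai aj : ℝ) (haj : 0 < aj) (hij : aj < ai) (hai : ai < 1/2) :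
    (1/2 * ((4*ai^2 - 1 + Real.sqrt ((1 - 4*ai^2)*(1 - 4*aj^2))) / (ai^2 - aj^2)) * aj) / aj < 1 ∧
    (1 : ℝ) < (1/2 * ((4*aj^2 - 1 + Real.sqrt ((1 - 4*ai^2)*(1 - 4*aj^2))) / (aj^2 - ai^2)) * ai) / ai := by
  have hsq : aj ^ 2 < ai ^ 2 := pow_lt_pow_left₀ hij haj.le two_ne_zero
  have hA : 0 ≤ 1 - 4 * ai ^ 2 := by nlinarith
  have am_gm := Real.sqrt_mul_lt_half_add_of_ne hA (y := 1 - 4 * aj ^ 2) (by linarith) (by linarith)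
  constructor
  · rw [mul_div_cancel_right₀ _ haj.ne']
    have hu : (4*ai^2 - 1 + √((1 - 4*ai^2)*(1 - 4*aj^2))) / (ai^2 - aj^2) < 2 := by
      rw [div_lt_iff₀ (by linarith)]; linarith
    linarith
  · rw [mul_div_cancel_right₀ _ (haj.trans hij).ne']
    have hv : 2 < (4*aj^2 - 1 + √((1 - 4*ai^2)*(1 - 4*aj^2))) / (aj^2 - ai^2) := by
      rw [lt_div_iff_of_neg (by linarith)]; linarith
    linarith
end

section
/- Let $a_i, a_j \in (0,1/2)$ with $a_i \neq a_j$, and set $u = \frac{1}{2}\cdot\frac{4a_i^2-1+\sqrt{\Delta_{ij}}}{a_i^2-a_j^2}\, a_j$, $v = \frac{1}{2}\cdot\frac{4a_j^2-1+\sqrt{\Delta_{ij}}}{a_j^2-a_i^2}\, a_i$ where $\Delta_{ij} = (1-4a_i^2)(1-4a_j^2)$. Then $(u,v)$ satisfies the system $a_i(u^2 - v^2 - 1) + v = 0$ and $a_j(v^2 - u^2 - 1) + u = 0$, and both $u > 0$ and $v > 0$. -/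
/-!
With `x = √(1 - 4aᵢ²)` and `y = √(1 - 4aⱼ²)` we have `√Δ = xy`, and the quotients simplify to
`u = 2aⱼx / (x + y)` and `v = 2aᵢy / (x + y)`, which are visibly positive. Since
`4aⱼ²x² - 4aᵢ²y² = x² - y²`, one gets `u² - v² = (x - y) / (x + y)`, and both equations follow.
-/

lemma div_sq_sub_sq_eq_div_add {x y : ℝ} (hxy : x ≠ y) (hsum : x + y ≠ 0) :
    (x * y - x ^ 2) / (y ^ 2 - x ^ 2) = x / (x + y) := by
  have hyx : y - x ≠ 0 := sub_ne_zero.2 hxy.symm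
  rw [div_eq_div_iff (by rw [sq_sub_sq]; exact mul_ne_zero (by rwa [add_comm]) hyx) hsum]
  ring

lemma four_sq_sub_one_add_sqrt_div {a b : ℝ} (ha : 4 * a ^ 2 ≤ 1) (hb : 4 * b ^ 2 ≤ 1)
    (hab : a ^ 2 ≠ b ^ 2) :
    (4 * a ^ 2 - 1 + √((1 - 4 * a ^ 2) * (1 - 4 * b ^ 2))) / (a ^ 2 - b ^ 2)
      = 4 * √(1 - 4 * a ^ 2) / (√(1 - 4 * a ^ 2) + √(1 - 4 * b ^ 2)) := by
  set x := √(1 - 4 * a ^ 2) with hx_def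
  set y := √(1 - 4 * b ^ 2) with hy_def
  have hx : x ^ 2 = 1 - 4 * a ^ 2 := Real.sq_sqrt (by linarith)
  have hy : y ^ 2 = 1 - 4 * b ^ 2 := Real.sq_sqrt (by linarith)
  have hxy : x ≠ y := fun h => hab (by linarith [congrArg (· ^ 2) h])
  have hsum : x + y ≠ 0 := by
    intro h
    have : x = 0 := by linarith [Real.sqrt_nonneg (1 - 4 * a ^ 2), Real.sqrt_nonneg (1 - 4 * b ^ 2)]
    exact hxy (by linarith)
  rw [Real.sqrt_mul (by linarith), ← hx_def, ← hy_def,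
    show 4 * a ^ 2 - 1 + x * y = x * y - x ^ 2 by linarith,
    show a ^ 2 - b ^ 2 = (y ^ 2 - x ^ 2) / 4 by linarith, div_div_eq_mul_div, mul_div_right_comm,
    div_sq_sub_sq_eq_div_add hxy hsum, mul_div_assoc, mul_comm]

lemma mul_sq_sub_sq_sub_one_add_eq_zero {a b x y u v : ℝ} (hx : x ^ 2 = 1 - 4 * a ^ 2)
    (hy : y ^ 2 = 1 - 4 * b ^ 2) (hsum : x + y ≠ 0) (hu : u = 2 * b * x / (x + y))
    (hv : v = 2 * a * y / (x + y)) :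
    a * (u ^ 2 - v ^ 2 - 1) + v = 0 := by
  have huv : u ^ 2 - v ^ 2 = (x - y) / (x + y) := by
    rw [hu, hv, div_pow, div_pow, ← sub_div, div_eq_div_iff (pow_ne_zero 2 hsum) hsum]
    linear_combination (x + y) * (x ^ 2 * hy - y ^ 2 * hx)
  rw [huv, hv]
  field_simp
  ring

theorem u_v_solve_system (ai aj : ℝ) (hai : 0 < ai) (hai' : ai < 1/2)
    (haj : 0 < aj) (haj' : aj < 1/2) (hne : ai ≠ aj) :
    let Δ := (1 - 4*ai^2)*(1 - 4*aj^2)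
    let u := 1/2 * ((4*ai^2 - 1 + Real.sqrt Δ) / (ai^2 - aj^2)) * aj
    let v := 1/2 * ((4*aj^2 - 1 + Real.sqrt Δ) / (aj^2 - ai^2)) * ai
    ai*(u^2 - v^2 - 1) + v = 0 ∧ aj*(v^2 - u^2 - 1) + u = 0 ∧ 0 < u ∧ 0 < v := by
  intro Δ u v
  have hi : 4 * ai ^ 2 < 1 := by nlinarith
  have hj : 4 * aj ^ 2 < 1 := by nlinarith
  have hsq : ai ^ 2 ≠ aj ^ 2 := fun h => hne (by nlinarith)
  set x := √(1 - 4 * ai ^ 2)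
  set y := √(1 - 4 * aj ^ 2)
  have hx : 0 < x := Real.sqrt_pos.2 (by linarith)
  have hy : 0 < y := Real.sqrt_pos.2 (by linarith)
  have hu : u = 2 * aj * x / (x + y) := by
    simp only [u, Δ, four_sq_sub_one_add_sqrt_div hi.le hj.le hsq]
    ring
  have hv : v = 2 * ai * y / (y + x) := by
    simp only [v, Δ, mul_comm (1 - 4 * ai ^ 2), four_sq_sub_one_add_sqrt_div hj.le hi.le hsq.symm]
    ring
  refine ⟨mul_sq_sub_sq_sub_one_add_eq_zero (Real.sq_sqrt (by linarith))
      (Real.sq_sqrt (by linarith)) (by positivity) hu (by rwa [add_comm] at hv),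
    mul_sq_sub_sq_sub_one_add_eq_zero (Real.sq_sqrt (by linarith))
      (Real.sq_sqrt (by linarith)) (by positivity) hv (by rwa [add_comm] at hu),
    by rw [hu]; positivity, by rw [hv]; positivity⟩
end

section
/- Let $a_i, a_j \in (0,1/2)$ with $a_i > a_j$, and define $t_{ij} = \Psi(a_i,a_j) = \frac{1}{2}\cdot\frac{4a_j^2-1+\sqrt{(1-4a_i^2)(1-4a_j^2)}}{a_j^2-a_i^2}\, a_i$. Then $a_i < t_{ij} < m(a_i)$, where $m(a_i) = \frac{1-\sqrt{1-4a_i^2}}{2a_i}$. -/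
/-! With `u = √(1 - 4aᵢ²)` and `v = √(1 - 4aⱼ²)` the quantity `tᵢⱼ` simplifies to
`2aᵢv / (u + v)`. The lower bound `aᵢ < tᵢⱼ` is then `u < v`, i.e. `aⱼ < aᵢ`, and, using
`4aᵢ² = (1 - u)(1 + u)`, the upper bound `tᵢⱼ < m(aᵢ) = (1 - u) / (2aᵢ)` reduces to `v < 1`. -/

open Real

lemma psi_eq_two_mul_div_add {a b u v : ℝ} (hu : u ^ 2 = 1 - 4 * a ^ 2)
    (hv : v ^ 2 = 1 - 4 * b ^ 2) (huv : u ≠ v) (hne : u + v ≠ 0) :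
    1/2 * ((4*b^2 - 1 + u * v) / (b^2 - a^2)) * a = 2 * a * v / (u + v) := by
  have hba : b ^ 2 - a ^ 2 = (u - v) * (u + v) / 4 := by linear_combination (hv - hu) / 4
  have hsub : u - v ≠ 0 := sub_ne_zero.mpr huv
  rw [hba]
  field_simp
  linear_combination (4 * a) * hv

lemma lt_two_mul_div_add {a u v : ℝ} (ha : 0 < a) (hu : 0 ≤ u) (huv : u < v) :
    a < 2 * a * v / (u + v) := by
  rw [lt_div_iff₀ (by linarith)]
  nlinarith

lemma two_mul_div_add_lt {a u v : ℝ} (ha : 0 < a) (hu : u ^ 2 = 1 - 4 * a ^ 2) (hu0 : 0 < u)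
    (hu1 : u < 1) (hv0 : 0 < v) (hv1 : v < 1) :
    2 * a * v / (u + v) < (1 - u) / (2 * a) := by
  rw [div_lt_div_iff₀ (by linarith) (by linarith)]
  have hsq : 2 * a * v * (2 * a) = (1 - u) * ((1 + u) * v) := by linear_combination v * hu
  have hstep : (1 + u) * v < u + v := by nlinarith
  rw [hsq]
  exact mul_lt_mul_of_pos_left hstep (by linarith)

theorem t_ij_between (ai aj : ℝ) (haj : 0 < aj) (hij : aj < ai) (hai : ai < 1/2) :
    let tij := 1/2 * ((4*aj^2 - 1 + Real.sqrt ((1 - 4*ai^2)*(1 - 4*aj^2))) / (aj^2 - ai^2)) * ai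
    ai < tij ∧ tij < (1 - Real.sqrt (1 - 4*ai^2)) / (2*ai) := by
  intro tij
  have hai0 : 0 < ai := haj.trans hij
  have hA : 0 < 1 - 4 * ai ^ 2 := by nlinarith
  have hAB : 1 - 4 * ai ^ 2 < 1 - 4 * aj ^ 2 := by nlinarith
  set u := √(1 - 4 * ai ^ 2)
  set v := √(1 - 4 * aj ^ 2)
  have hu0 : 0 < u := sqrt_pos.mpr hA
  have huv : u < v := sqrt_lt_sqrt hA.le hAB
  have hu1 : u < 1 := (sqrt_lt' one_pos).mpr (by nlinarith)
  have hv1 : v < 1 := (sqrt_lt' one_pos).mpr (by nlinarith)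
  have htij : tij = 2 * ai * v / (u + v) := by
    simp only [tij, sqrt_mul hA.le]
    exact psi_eq_two_mul_div_add (sq_sqrt hA.le) (sq_sqrt (hA.trans hAB).le) huv.ne (by positivity)
  rw [htij]
  exact ⟨lt_two_mul_div_add hai0 hu0.le huv,
    two_mul_div_add_lt hai0 (sq_sqrt hA.le) hu0 hu1 (hu0.trans huv) hv1⟩
end

section
/- The function $\theta(a) = a - \frac{1}{2} + \frac{1}{2}\sqrt{\frac{1-2a}{1+2a}}$ on $(0,1/2)$ attains its maximum at $a^* = \frac{\mu^2 - 2\mu + 4}{6\mu}$ where $\mu = \sqrt[3]{19+3\sqrt{33}}$; moreover, for all $a_1, a_2, a_3 \in [a^*, 1/2)$ one has $a_1 + a_2 + a_3 - \frac{1}{2} > 0.7 > \theta(a_i)$ for each $i$, provided $3a^* - 1/2 > 0.7$ (in fact $a^* \approx 0.41964$ so $3a^* - 0.5 > 0.7$), and $\theta(a) < 0.068$ for all $a \in (0,1/2)$. -/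
/-!
The substitution `t = √((1 - 2a)/(1 + 2a))` maps `(0, 1/2)` into `[0, 1]` and turns `θ` into the
rational function `t (1 - t)² / (2 (1 + t²))`. Since `θ'(a) = 1 - 1/((1 + 2a)² t)`, the critical
point solves `(1 - 2a)(1 + 2a)³ = 1`, whose root in `(0, 1/2)` is Cardano's `a*`; there
`t* = (1 + 2a*)⁻²` is the root of `t³ + t² + 3t - 1`, and modulo that cubic the difference of the
rational function at `t*` and at `t` is `(t - t*)²` times a nonnegative factor.
-/

noncomputable def thetaFun (a : ℝ) : ℝ :=
  a - 1/2 + Real.sqrt ((1 - 2*a)/(1 + 2*a))/2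

noncomputable def muCubeRoot : ℝ := (19 + 3*Real.sqrt 33) ^ ((1 : ℝ)/3)

noncomputable def aStar : ℝ := (muCubeRoot^2 - 2*muCubeRoot + 4) / (6*muCubeRoot)

noncomputable def ratioSqrt (a : ℝ) : ℝ := Real.sqrt ((1 - 2*a)/(1 + 2*a))

noncomputable def rationalTheta (t : ℝ) : ℝ := t * (1 - t)^2 / (2 * (1 + t^2))

section RatioSqrt

variable {a : ℝ}

lemma ratioSqrt_sq (h₀ : -1/2 < a) (h₁ : a ≤ 1/2) :
    ratioSqrt a ^ 2 = (1 - 2*a)/(1 + 2*a) :=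
  Real.sq_sqrt (div_nonneg (by linarith) (by linarith))

lemma ratioSqrt_le_one (h₀ : 0 ≤ a) : ratioSqrt a ≤ 1 := by
  refine Real.sqrt_le_one.mpr ?_
  rw [div_le_one (by linarith)]
  linarith

lemma thetaFun_eq_rationalTheta_ratioSqrt (h₀ : -1/2 < a) (h₁ : a ≤ 1/2) :
    thetaFun a = rationalTheta (ratioSqrt a) := by
  have key : ratioSqrt a ^ 2 * (1 + 2*a) = 1 - 2*a := by
    rw [ratioSqrt_sq h₀ h₁]; field_simp [show 1 + 2*a ≠ 0 by linarith]
  rw [thetaFun, rationalTheta, eq_div_iff (by positivity), ← ratioSqrt]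
  linear_combination key

lemma ratioSqrt_cubic_of_critical (h₀ : 0 < a) (h₁ : a < 1/2)
    (hcrit : (1 - 2*a) * (1 + 2*a)^3 = 1) :
    ratioSqrt a = 1 / (1 + 2*a)^2 ∧
      ratioSqrt a ^ 3 + ratioSqrt a ^ 2 + 3 * ratioSqrt a - 1 = 0 := by
  have hsq : (1 - 2*a)/(1 + 2*a) = (1 / (1 + 2*a)^2)^2 := by
    field_simp; linear_combination hcrit
  have heq : ratioSqrt a = 1 / (1 + 2*a)^2 := by
    rw [ratioSqrt, hsq, Real.sqrt_sq (by positivity)]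
  refine ⟨heq, ?_⟩
  have hne : ratioSqrt a - 1 ≠ 0 := by
    rw [heq, sub_ne_zero, Ne, div_eq_one_iff_eq (by positivity)]; nlinarith
  have hquartic : (1 + ratioSqrt a ^ 2)^2 = 4 * ratioSqrt a := by
    rw [ratioSqrt_sq (by linarith) h₁.le, heq]; field_simp; ring
  refine (mul_eq_zero.mp ?_).resolve_left hne
  linear_combination hquartic

end RatioSqrt

section RationalTheta

lemma rationalTheta_le_of_cubic {t s : ℝ} (ht : t ≤ 1) (hs : 0 < s)
    (hcubic : s^3 + s^2 + 3*s - 1 = 0) :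
    rationalTheta t ≤ rationalTheta s := by
  rw [rationalTheta, rationalTheta, div_le_div_iff₀ (by positivity) (by positivity)]
  have key : s*(1 + s^2)*(s*(1 - s)^2*(2*(1 + t^2)) - t*(1 - t)^2*(2*(1 + s^2)))
      = 2*(1 + s^2)*(t - s)^2*((1 - t)*s*(1 + s^2) + 2*s^2) := by
    linear_combination (2*t*s - 2*t^2*s - 2*s^2 + 2*t*s^2 + 2*t*s^3 - 2*t^2*s^3 - 2*s^4
      + 2*t*s^4) * hcubic
  have hfactor : 0 ≤ (1 - t)*s*(1 + s^2) + 2*s^2 := by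
    have : 0 ≤ (1 - t)*s*(1 + s^2) := by
      apply mul_nonneg (mul_nonneg (by linarith) hs.le); positivity
    positivity
  nlinarith [mul_nonneg (by positivity : (0:ℝ) ≤ 2*(1 + s^2)*(t - s)^2) hfactor,
    mul_pos hs (by positivity : (0:ℝ) < 1 + s^2)]

/-- The maximum of `rationalTheta` on `[0, 1]` is about `0.06796`, attained near `0.2953`;
the certificate is the cubic `(t - 0.2953)² (1.5454 - t)`. -/
lemma rationalTheta_lt_of_le_one {t : ℝ} (ht : t ≤ 1) : rationalTheta t < 0.068 := by
  rw [rationalTheta, div_lt_iff₀ (by positivity)]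
  nlinarith [mul_nonneg (sq_nonneg (t - 2953/10000)) (by linarith : (0:ℝ) ≤ 15454/10000 - t)]

end RationalTheta

section Cardano

lemma muCubeRoot_pos : 0 < muCubeRoot :=
  Real.rpow_pos_of_pos (by positivity) _

lemma muCubeRoot_pow_three : muCubeRoot^3 = 19 + 3*Real.sqrt 33 := by
  rw [muCubeRoot, ← Real.rpow_natCast (_ ^ _) 3, ← Real.rpow_mul (by positivity)]
  norm_num

/-- `μ³` and `64/μ³ = 19 - 3√33` are the two roots of `x² - 38x + 64`. -/
lemma muCubeRoot_pow_six : muCubeRoot^6 - 38*muCubeRoot^3 + 64 = 0 := by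
  have h33 : Real.sqrt 33 ^ 2 = 33 := Real.sq_sqrt (by norm_num)
  linear_combination (muCubeRoot^3 - 19 + 3*Real.sqrt 33) * muCubeRoot_pow_three + 9 * h33

lemma muCubeRoot_mem_Ioo : muCubeRoot ∈ Set.Ioo (3.3 : ℝ) 3.4 := by
  have h33 : Real.sqrt 33 ^ 2 = 33 := Real.sq_sqrt (by norm_num)
  have hlo : 5.7 < Real.sqrt 33 := by nlinarith [Real.sqrt_nonneg 33]
  have hhi : Real.sqrt 33 < 5.8 := by nlinarith [Real.sqrt_nonneg 33]
  have h := muCubeRoot_pow_three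
  constructor
  · nlinarith [muCubeRoot_pos, sq_nonneg (muCubeRoot - 3.3), sq_nonneg (muCubeRoot + 3.3)]
  · nlinarith [muCubeRoot_pos, sq_nonneg (muCubeRoot - 3.4), sq_nonneg (muCubeRoot + 3.4)]

lemma aStar_mem_Ioo : aStar ∈ Set.Ioo (0.4 : ℝ) 0.5 := by
  obtain ⟨hlo, hhi⟩ := muCubeRoot_mem_Ioo
  constructor
  · rw [aStar, lt_div_iff₀ (by linarith)]
    nlinarith [sq_nonneg (muCubeRoot - 3.3)]
  · rw [aStar, div_lt_iff₀ (by linarith)]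
    nlinarith

lemma aStar_critical : (1 - 2*aStar) * (1 + 2*aStar)^3 = 1 := by
  have hne : muCubeRoot ≠ 0 := muCubeRoot_pos.ne'
  rw [aStar]
  field_simp
  linear_combination 16 * (-muCubeRoot^2 + 2*muCubeRoot - 4) * muCubeRoot_pow_six

end Cardano

theorem thetaFun_max_and_bounds :
    IsMaxOn thetaFun (Set.Ioo (0 : ℝ) (1/2)) aStar ∧
    aStar ∈ Set.Ioo (0 : ℝ) (1/2) ∧
    (∀ a ∈ Set.Ioo (0 : ℝ) (1/2), thetaFun a < 0.068) ∧
    3*aStar - 1/2 > 0.7 ∧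
    (∀ a1 a2 a3 : ℝ, a1 ∈ Set.Ico aStar (1/2) → a2 ∈ Set.Ico aStar (1/2) →
      a3 ∈ Set.Ico aStar (1/2) →
      a1 + a2 + a3 - 1/2 > 0.7 ∧ thetaFun a1 < 0.7 ∧ thetaFun a2 < 0.7 ∧ thetaFun a3 < 0.7) := by
  obtain ⟨hlo, hhi⟩ := aStar_mem_Ioo
  have hmem : aStar ∈ Set.Ioo (0 : ℝ) (1/2) := ⟨by linarith, by linarith⟩
  have htheta_eq : ∀ a ∈ Set.Ioo (0 : ℝ) (1/2), thetaFun a = rationalTheta (ratioSqrt a) :=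
    fun a ha ↦ thetaFun_eq_rationalTheta_ratioSqrt (by linarith [ha.1]) ha.2.le
  have hbound : ∀ a ∈ Set.Ioo (0 : ℝ) (1/2), thetaFun a < 0.068 := fun a ha ↦ by
    rw [htheta_eq a ha]; exact rationalTheta_lt_of_le_one (ratioSqrt_le_one ha.1.le)
  have hmax : IsMaxOn thetaFun (Set.Ioo (0 : ℝ) (1/2)) aStar := by
    obtain ⟨hroot, hcubic⟩ := ratioSqrt_cubic_of_critical hmem.1 hmem.2 aStar_critical
    have hpos : 0 < ratioSqrt aStar := by rw [hroot]; positivity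
    intro a ha
    show thetaFun a ≤ thetaFun aStar
    rw [htheta_eq a ha, htheta_eq aStar hmem]
    exact rationalTheta_le_of_cubic (ratioSqrt_le_one ha.1.le) hpos hcubic
  have hbound' : ∀ a ∈ Set.Ico aStar (1/2), thetaFun a < 0.7 := fun a ha ↦ by
    linarith [hbound a ⟨by linarith [ha.1], ha.2⟩]
  refine ⟨hmax, hmem, hbound, by linarith, fun a1 a2 a3 h1 h2 h3 ↦ ?_⟩
  exact ⟨by linarith [h1.1, h2.1, h3.1], hbound' a1 h1, hbound' a2 h2, hbound' a3 h3⟩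
end
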